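/- Let k ≥ 5 and suppose 3k/2 ≤ n ≤ (k+1)(k+4)/6. Then (k+1)(n−k) + 2 ≤ C(k,0) + C(k,1) + C(k,2) + C(k,3), and consequently g(n,k) ≥ k−3. -/

import Mathlib

open scoped Classical

noncomputable section

/-- Boolean functions in `n` variables. -/
abbrev BF (n : ℕ) := (Fin n → ZMod 2) → ZMod 2

/-- `A` is a `k`-dimensional flat (coset of a `k`-dimensional linear subspace) of `𝔽₂ⁿ`. -/
def IsFlat {n : ℕ} (A : Set (Fin n → ZMod 2)) (k : ℕ) : Prop :=
  ∃ (W : Submodule (ZMod 2) (Fin n → ZMod 2)) (v : Fin n → ZMod 2),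
    Module.finrank (ZMod 2) W = k ∧ A = (fun w => v + w) '' (W : Set (Fin n → ZMod 2))

/-- The sum (parity) of `f` over a subset of `𝔽₂ⁿ`. -/
def flatSum {n : ℕ} (f : BF n) (A : Set (Fin n → ZMod 2)) : ZMod 2 :=
  ∑ x ∈ A.toFinite.toFinset, f x

/-- The restriction of `f` to `A` has algebraic degree at most `d`:
by the standard parity criterion, this holds iff the sum of `f` over every
`(d+1)`-dimensional flat contained in `A` vanishes. -/
def DegLE {n : ℕ} (f : BF n) (A : Set (Fin n → ZMod 2)) (d : ℕ) : Prop :=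
  ∀ B : Set (Fin n → ZMod 2), IsFlat B (d + 1) → B ⊆ A → flatSum f B = 0

/-- The algebraic degree of the restriction of `f` to `A`. -/
def degOn {n : ℕ} (f : BF n) (A : Set (Fin n → ZMod 2)) : ℕ :=
  sInf {d | DegLE f A d}

/-- `α(f, k)`: the minimal algebraic degree of `f` restricted to a `k`-dimensional flat. -/
def alphaDeg {n : ℕ} (f : BF n) (k : ℕ) : ℕ :=
  sInf {d | ∃ A, IsFlat A k ∧ degOn f A = d}

/-- `g(n, k) = max_f α(f, k)`. -/
def gdeg (n k : ℕ) : ℕ :=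
  sSup {m | ∃ f : BF n, alphaDeg f k = m}

/-- The nonlinearity of the restriction of `f` to `A`: the minimal Hamming distance,
on `A`, from `f` to an affine function. -/
def nlOn {n : ℕ} (f : BF n) (A : Set (Fin n → ZMod 2)) : ℕ :=
  sInf {m | ∃ (a : Fin n → ZMod 2) (c : ZMod 2),
    m = (A.toFinite.toFinset.filter (fun x => f x ≠ (∑ i, a i * x i) + c)).card}

/-! A union bound. A `k`-flat `A` is the image of an injective affine map from `𝔽₂ᵏ`, and if
`f` has degree at most `d` on `A` then the sums of `f` over the images of all subcubes of
dimension `> d` vanish. These `M = ∑_{i < k - d} C(k, i)` sums are independent linear functionals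
of `f`, because the subset-sum (zeta) transform is an involution in characteristic `2`; so at most
`2^(2^n - M)` functions have degree `≤ d` on a given `A`. Counting (point, basis) pairs shows that
there are fewer than `2^((k+1)(n-k)+2)` flats of dimension `k`, hence if this is at most `2^M`
some `f` has degree `> d` on every `k`-flat. For `d = k - 4` the hypothesis on `n` gives this
inequality, since `6 ∑_{i < 4} C(k, i) = k³ + 5k + 6`. -/

open Finset

section CoordSubspace

variable (K : Type*) {ι : Type*} [Field K] [Fintype ι] [DecidableEq ι]

def coordSubspace (T : Finset ι) : Submodule K (ι → K) :=
  LinearMap.ker (LinearMap.funLeft K K ((↑) : ↥(Tᶜ) → ι))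

variable {K}

lemma mem_coordSubspace {T : Finset ι} {x : ι → K} :
    x ∈ coordSubspace K T ↔ ∀ i ∉ T, x i = 0 := by
  simp [coordSubspace, funext_iff, LinearMap.funLeft]

lemma finrank_coordSubspace (T : Finset ι) : Module.finrank K (coordSubspace K T) = #T := by
  have h := (LinearMap.funLeft K K ((↑) : ↥(Tᶜ) → ι)).finrank_range_add_finrank_ker
  rw [LinearMap.range_eq_top.mpr (LinearMap.funLeft_surjective_of_injective _ _ _
    Subtype.val_injective), finrank_top, Module.finrank_fintype_fun_eq_card,
    Module.finrank_fintype_fun_eq_card, Fintype.card_coe, card_compl] at h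
  have := card_le_univ T
  unfold coordSubspace
  omega

end CoordSubspace

lemma ZMod.two_eq_zero_or_eq_one (a : ZMod 2) : a = 0 ∨ a = 1 := by
  revert a; decide

section Flats

variable {n : ℕ}

lemma isFlat_image {V : Type*} [AddCommGroup V] [Module (ZMod 2) V]
    (L : V →ₗ[ZMod 2] (Fin n → ZMod 2)) (hL : Function.Injective L) (v : Fin n → ZMod 2)
    (U : Submodule (ZMod 2) V) :
    IsFlat ((fun x => v + L x) '' U) (Module.finrank (ZMod 2) U) :=
  ⟨U.map L, v, (Submodule.equivMapOfInjective L hL U).finrank_eq.symm, by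
    rw [Submodule.map_coe, Set.image_image]⟩

lemma exists_isFlat {k : ℕ} (hkn : k ≤ n) : ∃ A : Set (Fin n → ZMod 2), IsFlat A k := by
  obtain ⟨T, -, hT⟩ := exists_subset_card_eq (s := (univ : Finset (Fin n))) (by simpa using hkn)
  exact ⟨_, hT ▸ finrank_coordSubspace (K := ZMod 2) T ▸
    isFlat_image LinearMap.id Function.injective_id 0 (coordSubspace (ZMod 2) T)⟩

lemma IsFlat.exists_param {A : Set (Fin n → ZMod 2)} {r : ℕ} (hA : IsFlat A r) :
    ∃ (L : (Fin r → ZMod 2) →ₗ[ZMod 2] (Fin n → ZMod 2)) (v : Fin n → ZMod 2),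
      Function.Injective L ∧ A = Set.range fun x => v + L x := by
  obtain ⟨W, v, hW, rfl⟩ := hA
  let e := (Module.finBasisOfFinrankEq (ZMod 2) W hW).equivFun.symm
  refine ⟨W.subtype ∘ₗ e.toLinearMap, v, W.injective_subtype.comp e.injective, ?_⟩
  rw [Set.range_comp' (v + ·), LinearMap.coe_comp, Set.range_comp, LinearEquiv.coe_coe,
    e.surjective.range_eq, Set.image_univ, Submodule.coe_subtype, Subtype.range_coe]

lemma IsFlat.ncard_eq {A : Set (Fin n → ZMod 2)} {r : ℕ} (hA : IsFlat A r) : A.ncard = 2 ^ r := by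
  obtain ⟨L, v, hL, rfl⟩ := hA.exists_param
  rw [Set.ncard_range_of_injective fun x y h => hL (add_left_cancel h)]
  simp

lemma IsFlat.exists_disjoint_union {A : Set (Fin n → ZMod 2)} {r : ℕ} (hA : IsFlat A (r + 1)) :
    ∃ B C, IsFlat B r ∧ IsFlat C r ∧ Disjoint B C ∧ A = B ∪ C := by
  obtain ⟨L, v, hL, rfl⟩ := hA.exists_param
  set U := coordSubspace (ZMod 2) (univ.erase (0 : Fin (r + 1)))
  have hU : Module.finrank (ZMod 2) U = r := by simp [U, finrank_coordSubspace]
  have hmem : ∀ x, x ∈ U ↔ x 0 = 0 := fun x => by simp [U, mem_coordSubspace]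
  set e : Fin (r + 1) → ZMod 2 := Pi.single 0 1
  refine ⟨_, _, hU ▸ isFlat_image L hL v U, hU ▸ isFlat_image L hL (v + L e) U, ?_, ?_⟩
  · rw [Set.disjoint_left]
    rintro _ ⟨x, hx, rfl⟩ ⟨y, hy, hxy⟩
    have hxy : x = e + y := hL (by simpa [add_assoc] using hxy.symm)
    have := (hmem x).1 hx
    simp [hxy, e, (hmem y).1 hy] at this
  · ext y
    constructor
    · rintro ⟨x, rfl⟩
      rcases ZMod.two_eq_zero_or_eq_one (x 0) with h | h
      · exact Or.inl ⟨x, (hmem x).2 h, rfl⟩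
      · refine Or.inr ⟨x - e, (hmem _).2 (by simp [e, h]), ?_⟩
        simp only [map_sub]
        abel
    · rintro (⟨x, -, rfl⟩ | ⟨x, -, rfl⟩)
      · exact ⟨x, rfl⟩
      · exact ⟨e + x, by simp [add_assoc]⟩

lemma flatSum_image {α : Type*} (f : BF n) {φ : α → Fin n → ZMod 2}
    (hφ : Function.Injective φ) (s : Finset α) :
    flatSum f (φ '' s) = ∑ x ∈ s, f (φ x) := by
  rw [flatSum, ← sum_image fun x _ y _ h => hφ h]
  congr
  ext
  simp

lemma flatSum_union (f : BF n) {B C : Set (Fin n → ZMod 2)} (hBC : Disjoint B C) :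
    flatSum f (B ∪ C) = flatSum f B + flatSum f C := by
  rw [flatSum, flatSum, flatSum, ← sum_union (Set.Finite.disjoint_toFinset.mpr hBC)]
  congr
  ext
  simp

lemma DegLE.flatSum_eq_zero {f : BF n} {A B : Set (Fin n → ZMod 2)} {d r : ℕ}
    (h : DegLE f A d) (hB : IsFlat B r) (hBA : B ⊆ A) (hdr : d < r) : flatSum f B = 0 := by
  induction r, hdr using Nat.le_induction generalizing B with
  | base => exact h B hB hBA
  | succ r _ ih =>
    obtain ⟨C, D, hC, hD, hCD, rfl⟩ := hB.exists_disjoint_union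
    rw [flatSum_union f hCD, ih hC (Set.subset_union_left.trans hBA),
      ih hD (Set.subset_union_right.trans hBA), add_zero]

lemma DegLE.mono {f : BF n} {A : Set (Fin n → ZMod 2)} {d d' : ℕ} (h : DegLE f A d)
    (hdd' : d ≤ d') : DegLE f A d' :=
  fun _ hB hBA => h.flatSum_eq_zero hB hBA (by omega)

lemma degLE_of_isFlat (f : BF n) {A : Set (Fin n → ZMod 2)} {k : ℕ} (hA : IsFlat A k) :
    DegLE f A k := by
  intro B hB hBA
  have := Set.ncard_le_ncard hBA A.toFinite
  rw [hA.ncard_eq, hB.ncard_eq] at this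
  exact absurd this (Nat.pow_lt_pow_succ one_lt_two).not_ge

end Flats

section ZetaTransform

variable (R α : Type*) [Ring R]

def zetaTransform : (Finset α → R) →ₗ[R] (Finset α → R) where
  toFun c U := ∑ S ∈ U.powerset, c S
  map_add' c c' := by ext U; simp [sum_add_distrib]
  map_smul' a c := by ext U; simp [mul_sum]

variable {R α}

lemma zetaTransform_apply (c : Finset α → R) (U : Finset α) :
    zetaTransform R α c U = ∑ S ∈ U.powerset, c S :=
  rfl

-- In the double sum each `S ⊆ U` is counted `2 ^ (#U - #S)` times, which vanishes unless `S = U`.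
lemma zetaTransform_involutive [CharP R 2] [DecidableEq α] :
    Function.Involutive (zetaTransform R α) := by
  intro c
  ext U
  simp only [zetaTransform_apply]
  rw [sum_comm' (t' := U.powerset) (s' := fun S => Icc S U) fun T S => by
    simp only [mem_powerset, mem_Icc]
    exact ⟨fun h => ⟨⟨h.2, h.1⟩, h.2.trans h.1⟩, fun h => ⟨h.1.2, h.1.1⟩⟩]
  rw [sum_eq_single_of_mem U (mem_powerset_self U)]
  · simp
  · intro S hS hSU
    have hlt : #S < #U := card_lt_card (ssubset_of_subset_of_ne (mem_powerset.mp hS) hSU)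
    rw [sum_const, card_Icc_finset (mem_powerset.mp hS), nsmul_eq_mul, Nat.cast_pow,
      Nat.cast_two, CharTwo.two_eq_zero, zero_pow (by omega), zero_mul]

end ZetaTransform

section SubsetCount

variable {α : Type*} [Fintype α]

lemma card_filter_card_lt (m : ℕ) :
    #{T : Finset α | #T < m} = ∑ i ∈ range m, (Fintype.card α).choose i := by
  rw [card_eq_sum_card_fiberwise (f := card) (t := range m) fun T hT => by simpa using hT]
  refine sum_congr rfl fun i hi => ?_
  rw [← card_univ, ← card_powersetCard]
  congr 1
  ext T
  simp only [mem_filter, mem_univ, true_and, mem_powersetCard, subset_univ]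
  have := mem_range.mp hi
  omega

lemma card_filter_lt_card [DecidableEq α] (d : ℕ) :
    #{T : Finset α | d < #T} = ∑ i ∈ range (Fintype.card α - d), (Fintype.card α).choose i := by
  rw [← card_filter_card_lt]
  refine card_nbij' compl compl (fun T hT => ?_) (fun T hT => ?_) (fun T _ => compl_compl T)
    (fun T _ => compl_compl T) <;>
  · simp only [coe_filter, mem_univ, true_and, Set.mem_ofPred_eq, card_compl] at hT ⊢
    have := card_le_univ T
    omega

end SubsetCount

lemma AddMonoidHom.card_ker_mul_card_of_surjective {G H : Type*} [AddGroup G] [AddGroup H]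
    [Finite G] (φ : G →+ H) (hφ : Function.Surjective φ) :
    Nat.card φ.ker * Nat.card H = Nat.card G := by
  rw [← φ.ker.card_mul_index, AddSubgroup.index_ker φ, φ.range_eq_top.mpr hφ, AddSubgroup.card_top]

lemma image_indicator_powerset {ι : Type*} [Fintype ι] [DecidableEq ι] (T : Finset ι) :
    (fun S : Finset ι => (S : Set ι).indicator (1 : ι → ZMod 2)) '' T.powerset =
      coordSubspace (ZMod 2) T := by
  ext x
  simp only [Set.mem_image, coe_powerset, Set.mem_preimage, Set.mem_powerset_iff, coe_subset,
    SetLike.mem_coe, mem_coordSubspace]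
  constructor
  · rintro ⟨S, hST, rfl⟩ i hi
    exact Set.indicator_of_notMem (fun h => hi (hST h)) _
  · intro hx
    refine ⟨({i | x i ≠ 0} : Finset ι),
      fun i hi => by_contra fun hiT => (mem_filter.mp hi).2 (hx i hiT), ?_⟩
    ext i
    rcases ZMod.two_eq_zero_or_eq_one (x i) with h | h <;> simp [Set.indicator, h]

section KernelCount

variable {n : ℕ}

lemma isFlat_image_powerset {k : ℕ} (L : (Fin k → ZMod 2) →ₗ[ZMod 2] (Fin n → ZMod 2))
    (hL : Function.Injective L) (v : Fin n → ZMod 2) (T : Finset (Fin k)) :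
    IsFlat ((fun S : Finset (Fin k) => v + L ((S : Set (Fin k)).indicator 1)) '' T.powerset)
      #T := by
  rw [← Set.image_image (fun x => v + L x), image_indicator_powerset,
    ← finrank_coordSubspace (K := ZMod 2) T]
  exact isFlat_image L hL v _

lemma card_degLE_mul_le {A : Set (Fin n → ZMod 2)} {k : ℕ} (hA : IsFlat A k) (d : ℕ) :
    #{f : BF n | DegLE f A d} * 2 ^ #{T : Finset (Fin k) | d < #T} ≤ 2 ^ 2 ^ n := by
  obtain ⟨L, v, hL, rfl⟩ := hA.exists_param
  set φ : Finset (Fin k) → Fin n → ZMod 2 := fun S => v + L ((S : Set (Fin k)).indicator 1)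
  have hφ : φ.Injective := fun S S' h => by
    ext i
    have := congrFun (hL (add_left_cancel h)) i
    simp only [Set.indicator, mem_coe, Pi.one_apply] at this
    split_ifs at this <;> simp_all
  -- `σ f T` is the sum of `f` over the image of the subcube `{x | x i = 0 for i ∉ T}`.
  let σ : BF n →ₗ[ZMod 2] ({T : Finset (Fin k) // d < #T} → ZMod 2) :=
    LinearMap.funLeft _ _ Subtype.val ∘ₗ zetaTransform (ZMod 2) (Fin k) ∘ₗ
      LinearMap.funLeft _ _ φ
  have hσ : Function.Surjective σ :=
    (LinearMap.funLeft_surjective_of_injective (ZMod 2) (ZMod 2) _ Subtype.val_injective).comp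
      (zetaTransform_involutive.surjective.comp
        (LinearMap.funLeft_surjective_of_injective (ZMod 2) (ZMod 2) _ hφ))
  have hker : ({f | DegLE f (Set.range fun x => v + L x) d} : Finset (BF n)) ⊆
      ({f | σ f = 0} : Finset (BF n)) := by
    intro f hf
    simp only [mem_filter, mem_univ, true_and] at hf ⊢
    ext ⟨T, hT⟩
    change ∑ S ∈ T.powerset, f (φ S) = 0
    rw [← flatSum_image f hφ]
    exact hf.flatSum_eq_zero (isFlat_image_powerset L hL v T)
      (Set.image_subset_iff.2 fun S _ => ⟨_, rfl⟩) hT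
  calc #{f : BF n | DegLE f _ d} * 2 ^ #{T : Finset (Fin k) | d < #T}
      ≤ Nat.card σ.toAddMonoidHom.ker * Nat.card ({T : Finset (Fin k) // d < #T} → ZMod 2) := by
        gcongr
        · refine (card_le_card hker).trans_eq ?_
          rw [← Fintype.card_subtype, ← Nat.card_eq_fintype_card]
          rfl
        · simp [Fintype.card_subtype]
    _ = 2 ^ 2 ^ n := by
        rw [σ.toAddMonoidHom.card_ker_mul_card_of_surjective hσ]
        simp

end KernelCount

section Numeric

lemma prod_range_succ_two_pow_sub (k : ℕ) :
    ∏ i ∈ range (k + 1), (2 ^ (k + 1) - 2 ^ i) =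
      2 ^ k * (∏ i ∈ range k, (2 ^ k - 2 ^ i)) * (2 ^ (k + 1) - 1) := by
  have h : ∀ i, 2 ^ (k + 1) - 2 ^ (i + 1) = 2 * (2 ^ k - 2 ^ i) := fun i => by
    rw [pow_succ, pow_succ, ← Nat.sub_mul, mul_comm]
  rw [prod_range_succ', pow_zero, prod_congr rfl fun i _ => h i, prod_mul_distrib, prod_const,
    card_range]

-- This is `∏_{1 ≤ j ≤ k} (1 - 2⁻ʲ) ≥ 1/4 + 2^(-k-1)`, a strengthening of `> 1/4` that survives
-- the induction.
lemma two_pow_add_two_mul_le (k : ℕ) (hk : 1 ≤ k) :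
    (2 ^ k + 2) * 2 ^ (k * k) ≤ 4 * 2 ^ k * ∏ i ∈ range k, (2 ^ k - 2 ^ i) := by
  induction k, hk using Nat.le_induction with
  | base => decide
  | succ k hk ih =>
    rw [prod_range_succ_two_pow_sub]
    have hK : 2 ≤ 2 ^ k := Nat.le_self_pow (by omega) 2
    have hexp : 2 ^ ((k + 1) * (k + 1)) = 2 ^ (k * k) * 2 ^ k * 2 ^ k * 2 := by
      rw [← pow_add, ← pow_add, ← pow_succ]; ring_nf
    rw [hexp, pow_succ]
    set K := 2 ^ k
    set N := ∏ i ∈ range k, (K - 2 ^ i)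
    set X := 2 ^ (k * k)
    obtain ⟨M, hM, hMK⟩ : ∃ M, K * 2 - 1 = M ∧ M + 1 = K * 2 := ⟨_, rfl, by omega⟩
    rw [hM]
    have hKM : (K * 2 + 2) * K ≤ (K + 2) * M := by nlinarith
    calc (K * 2 + 2) * (X * K * K * 2) = ((K * 2 + 2) * K) * (2 * K * X) := by ring
      _ ≤ ((K + 2) * M) * (2 * K * X) := by gcongr
      _ = ((K + 2) * X) * (2 * K * M) := by ring
      _ ≤ (4 * K * N) * (2 * K * M) := by gcongr
      _ = 4 * (K * 2) * (K * N * M) := by ring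

lemma two_pow_mul_self_lt (k : ℕ) : 2 ^ (k * k) < 4 * ∏ i ∈ range k, (2 ^ k - 2 ^ i) := by
  rcases Nat.eq_zero_or_pos k with rfl | hk
  · decide
  · refine Nat.lt_of_mul_lt_mul_left (a := 2 ^ k) ?_
    calc 2 ^ k * 2 ^ (k * k) < (2 ^ k + 2) * 2 ^ (k * k) := by gcongr; omega
      _ ≤ 2 ^ k * (4 * ∏ i ∈ range k, (2 ^ k - 2 ^ i)) := by
        linarith [two_pow_add_two_mul_le k hk]

end Numeric

section FlatCount

variable {n k : ℕ}

def flatOfFrame (p : Fin n → ZMod 2) (b : Fin k → Fin n → ZMod 2) : Set (Fin n → ZMod 2) :=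
  Set.range fun x => p + Fintype.linearCombination (ZMod 2) b x

lemma isFlat_flatOfFrame (p : Fin n → ZMod 2) {b : Fin k → Fin n → ZMod 2}
    (hb : LinearIndependent (ZMod 2) b) : IsFlat (flatOfFrame p b) k := by
  have := isFlat_image _ hb.fintypeLinearCombination_injective p ⊤
  rwa [finrank_top, Module.finrank_fin_fun, Submodule.top_coe, Set.image_univ] at this

lemma flatOfFrame_subtype_comp {W : Submodule (ZMod 2) (Fin n → ZMod 2)}
    (hW : Module.finrank (ZMod 2) W = k) {s : Fin k → W} (hs : LinearIndependent (ZMod 2) s)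
    (p : Fin n → ZMod 2) : flatOfFrame p (W.subtype ∘ s) = (p + ·) '' W := by
  have hspan : Submodule.span (ZMod 2) (Set.range s) = ⊤ :=
    hs.span_eq_top_of_card_eq_finrank' (by rw [Fintype.card_fin, hW])
  rw [flatOfFrame, Set.range_comp' (p + ·), ← LinearMap.coe_range, Fintype.range_linearCombination,
    Set.range_comp, Submodule.span_image, hspan, Submodule.map_subtype_top]

lemma le_card_fiber_flatOfFrame {A : Set (Fin n → ZMod 2)} (hA : IsFlat A k) :
    2 ^ k * ∏ i ∈ range k, (2 ^ k - 2 ^ i) ≤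
      #{pb ∈ ({pb | LinearIndependent (ZMod 2) pb.2} :
          Finset ((Fin n → ZMod 2) × (Fin k → Fin n → ZMod 2))) | flatOfFrame pb.1 pb.2 = A} := by
  obtain ⟨W, v, hW, rfl⟩ := id hA
  let frames : Finset (Fin k → W) := {s | LinearIndependent (ZMod 2) s}
  have hframes : #frames = ∏ i ∈ range k, (2 ^ k - 2 ^ i) := by
    have := card_linearIndependent (K := ZMod 2) (V := W) hW.ge
    rwa [hW, ZMod.card, Nat.card_eq_fintype_card, Fintype.card_subtype,
      Fin.prod_univ_eq_prod_range (fun i => 2 ^ k - 2 ^ i)] at this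
  have hpoints : #((fun w => v + w) '' W).toFinset = 2 ^ k := by
    rw [← Set.ncard_eq_toFinset_card', hA.ncard_eq]
  let g : (Fin n → ZMod 2) × (Fin k → W) → (Fin n → ZMod 2) × (Fin k → Fin n → ZMod 2) :=
    fun ps => (ps.1, W.subtype ∘ ps.2)
  have hg : g.Injective := fun ps qs h => by
    simp only [g, Prod.ext_iff] at h ⊢
    exact ⟨h.1, funext fun i => W.injective_subtype (congrFun h.2 i)⟩
  calc 2 ^ k * ∏ i ∈ range k, (2 ^ k - 2 ^ i)
      = #((((fun w => v + w) '' W).toFinset ×ˢ frames).image g) := by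
        rw [card_image_of_injective _ hg, card_product, hpoints, hframes]
    _ ≤ _ := card_le_card fun pb hpb => ?_
  obtain ⟨⟨p, s⟩, hps, rfl⟩ := mem_image.mp hpb
  obtain ⟨hp, hs⟩ := mem_product.mp hps
  simp only [Set.mem_toFinset, frames, mem_filter, mem_univ, true_and] at hp hs
  simp only [mem_filter, mem_univ, true_and, g]
  refine ⟨hs.map' W.subtype W.ker_subtype, ?_⟩
  rw [flatOfFrame_subtype_comp hW hs]
  obtain ⟨w, hw, rfl⟩ := hp
  ext y
  constructor
  · rintro ⟨u, hu, rfl⟩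
    exact ⟨w + u, W.add_mem hw hu, (add_assoc v w u).symm⟩
  · rintro ⟨u, hu, rfl⟩
    exact ⟨u - w, W.sub_mem hu hw, add_add_sub_cancel v u w⟩

lemma card_flats_mul_le :
    (2 ^ k * ∏ i ∈ range k, (2 ^ k - 2 ^ i)) * #{A : Set (Fin n → ZMod 2) | IsFlat A k} ≤
      2 ^ (n * (k + 1)) := by
  let frames : Finset ((Fin n → ZMod 2) × (Fin k → Fin n → ZMod 2)) :=
    {pb | LinearIndependent (ZMod 2) pb.2}
  have hmaps : ∀ pb ∈ frames, flatOfFrame pb.1 pb.2 ∈ ({A | IsFlat A k} : Finset _) :=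
    fun pb hpb => mem_filter.mpr ⟨mem_univ _, isFlat_flatOfFrame _ (mem_filter.mp hpb).2⟩
  calc (2 ^ k * ∏ i ∈ range k, (2 ^ k - 2 ^ i)) * #{A : Set (Fin n → ZMod 2) | IsFlat A k}
      ≤ #frames := mul_card_image_le_card_of_maps_to hmaps _
        fun A hA => le_card_fiber_flatOfFrame (mem_filter.mp hA).2
    _ ≤ Fintype.card ((Fin n → ZMod 2) × (Fin k → Fin n → ZMod 2)) := card_le_univ _
    _ = 2 ^ (n * (k + 1)) := by
        simp only [Fintype.card_prod, Fintype.card_fun, ZMod.card, Fintype.card_fin]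
        ring

end FlatCount

lemma card_flats_lt {n k : ℕ} (hkn : k ≤ n) :
    #{A : Set (Fin n → ZMod 2) | IsFlat A k} < 2 ^ ((k + 1) * (n - k) + 2) := by
  set F := #{A : Set (Fin n → ZMod 2) | IsFlat A k}
  rcases Nat.eq_zero_or_pos F with hF | hF
  · rw [hF]; positivity
  obtain ⟨m, rfl⟩ := Nat.exists_eq_add_of_le hkn
  refine Nat.lt_of_mul_lt_mul_left (a := 2 ^ k * 2 ^ (k * k)) ?_
  calc 2 ^ k * 2 ^ (k * k) * F < 2 ^ k * (4 * ∏ i ∈ range k, (2 ^ k - 2 ^ i)) * F := by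
        gcongr; exact two_pow_mul_self_lt k
    _ = 4 * ((2 ^ k * ∏ i ∈ range k, (2 ^ k - 2 ^ i)) * F) := by ring
    _ ≤ 4 * 2 ^ ((k + m) * (k + 1)) := by gcongr; exact card_flats_mul_le
    _ = 2 ^ k * 2 ^ (k * k) * 2 ^ ((k + 1) * (k + m - k) + 2) := by
        rw [Nat.add_sub_cancel_left, ← pow_add, ← pow_add, show 4 = 2 ^ 2 by rfl, ← pow_add]
        ring_nf

section Degree

variable {n k d : ℕ}

lemma exists_forall_not_degLE (hkn : k ≤ n)
    (h : (k + 1) * (n - k) + 2 ≤ ∑ i ∈ range (k - d), k.choose i) :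
    ∃ f : BF n, ∀ A, IsFlat A k → ¬ DegLE f A d := by
  set M := #{T : Finset (Fin k) | d < #T}
  have hM : (k + 1) * (n - k) + 2 ≤ M := by
    simpa only [M, card_filter_lt_card, Fintype.card_fin] using h
  set flats : Finset (Set (Fin n → ZMod 2)) := {A | IsFlat A k}
  have hsum : ∑ A ∈ flats, #{f : BF n | DegLE f A d} < 2 ^ 2 ^ n := by
    refine Nat.lt_of_mul_lt_mul_right (a := 2 ^ M) ?_
    calc (∑ A ∈ flats, #{f : BF n | DegLE f A d}) * 2 ^ M
        ≤ ∑ _A ∈ flats, 2 ^ 2 ^ n := by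
          rw [sum_mul]
          exact sum_le_sum fun A hA => card_degLE_mul_le (mem_filter.mp hA).2 d
      _ = #flats * 2 ^ 2 ^ n := by rw [sum_const, smul_eq_mul]
      _ < 2 ^ M * 2 ^ 2 ^ n := by
          gcongr
          exact (card_flats_lt hkn).trans_le (Nat.pow_le_pow_right two_pos hM)
      _ = 2 ^ 2 ^ n * 2 ^ M := mul_comm _ _
  by_contra! hcover
  have hsub : (univ : Finset (BF n)) ⊆ flats.biUnion fun A => {f | DegLE f A d} := fun f _ => by
    obtain ⟨A, hA, hf⟩ := hcover f
    exact mem_biUnion.mpr ⟨A, mem_filter.mpr ⟨mem_univ _, hA⟩, mem_filter.mpr ⟨mem_univ _, hf⟩⟩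
  have := (card_le_card hsub).trans card_biUnion_le
  simp only [card_univ, Fintype.card_fun, ZMod.card, Fintype.card_fin] at this
  omega

lemma degOn_le (f : BF n) {A : Set (Fin n → ZMod 2)} (hA : IsFlat A k) : degOn f A ≤ k :=
  Nat.sInf_le (degLE_of_isFlat f hA)

lemma lt_degOn {f : BF n} {A : Set (Fin n → ZMod 2)} (hA : IsFlat A k) (h : ¬ DegLE f A d) :
    d < degOn f A := by
  by_contra! hle
  have hdeg : DegLE f A (degOn f A) :=
    Nat.sInf_mem (s := {d | DegLE f A d}) ⟨k, degLE_of_isFlat f hA⟩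
  exact h (hdeg.mono hle)

lemma lt_alphaDeg (hkn : k ≤ n) {f : BF n} (h : ∀ A, IsFlat A k → ¬ DegLE f A d) :
    d < alphaDeg f k := by
  obtain ⟨A, hA⟩ := exists_isFlat hkn
  exact le_csInf (s := {m | ∃ A, IsFlat A k ∧ degOn f A = m}) ⟨_, A, hA, rfl⟩
    fun _ ⟨B, hB, hfB⟩ => hfB ▸ lt_degOn hB (h B hB)

lemma alphaDeg_le (hkn : k ≤ n) (f : BF n) : alphaDeg f k ≤ k := by
  obtain ⟨A, hA⟩ := exists_isFlat hkn
  exact (Nat.sInf_le (s := {m | ∃ A, IsFlat A k ∧ degOn f A = m}) ⟨A, hA, rfl⟩).trans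
    (degOn_le f hA)

lemma alphaDeg_le_gdeg (hkn : k ≤ n) (f : BF n) : alphaDeg f k ≤ gdeg n k :=
  le_csSup ⟨k, fun _ ⟨g, hg⟩ => hg ▸ alphaDeg_le hkn g⟩ ⟨f, rfl⟩

theorem lt_gdeg_of_le_sum_choose (hkn : k ≤ n)
    (h : (k + 1) * (n - k) + 2 ≤ ∑ i ∈ range (k - d), k.choose i) : d < gdeg n k := by
  obtain ⟨f, hf⟩ := exists_forall_not_degLE hkn h
  exact (lt_alphaDeg hkn hf).trans_le (alphaDeg_le_gdeg hkn f)

end Degree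

lemma six_mul_sum_range_four_choose (k : ℕ) :
    6 * ∑ i ∈ range 4, k.choose i = k ^ 3 + 5 * k + 6 := by
  rcases k with _ | _ | m
  · rfl
  · rfl
  · have h2 := Nat.descFactorial_eq_factorial_mul_choose (m + 2) 2
    have h3 := Nat.descFactorial_eq_factorial_mul_choose (m + 2) 3
    simp only [Nat.descFactorial_succ, Nat.descFactorial_zero, Nat.factorial_succ,
      Nat.factorial_zero, Nat.sub_zero, show m + 2 - 1 = m + 1 by omega,
      show m + 2 - 2 = m by omega] at h2 h3
    simp only [sum_range_succ, sum_range_zero, Nat.choose_zero_right, Nat.choose_one_right]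
    ring_nf at h2 h3 ⊢
    omega

lemma add_two_le_sum_range_four_choose {n k : ℕ} (hk : 5 ≤ k) (h : 6 * n ≤ (k + 1) * (k + 4)) :
    (k + 1) * (n - k) + 2 ≤ ∑ i ∈ range 4, k.choose i := by
  have hsum := six_mul_sum_range_four_choose k
  rcases lt_or_ge n k with hnk | hkn
  · rw [Nat.sub_eq_zero_of_le hnk.le]
    nlinarith
  · obtain ⟨m, rfl⟩ := Nat.exists_eq_add_of_le hkn
    have hm : 6 * m + k ≤ k * k + 4 := by nlinarith
    rw [Nat.add_sub_cancel_left]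
    nlinarith [Nat.mul_le_mul_left (k + 1) hm]

/-- For `k ≥ 5` and `3k/2 ≤ n ≤ (k+1)(k+4)/6`:
`(k+1)(n-k)+2 ≤ C(k,0)+C(k,1)+C(k,2)+C(k,3)` and `g(n,k) ≥ k-3`. -/
theorem stmt14 {n k : ℕ} (hk : 5 ≤ k) (h1 : 3 * k ≤ 2 * n)
    (h2 : 6 * n ≤ (k + 1) * (k + 4)) :
    (k + 1) * (n - k) + 2 ≤ ∑ i ∈ Finset.range 4, Nat.choose k i ∧
    k - 3 ≤ gdeg n k := by
  have hsum := add_two_le_sum_range_four_choose hk h2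
  have hd : k - (k - 4) = 4 := by omega
  have hgdeg := lt_gdeg_of_le_sum_choose (d := k - 4) (by omega) (hd ▸ hsum)
  exact ⟨hsum, by omega⟩
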